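/- arXiv:2604.08166 — 4 statements merged into one kernel-verified Lean document; each statement's English description precedes it below -/
import Mathlib

section
/- There exists a vector space M over ℝ (namely ℝ²), a complete lattice L in which 0 is not meet-prime, and an L-fuzzy submodule μ of M whose support μ* = {m | μ(m) > 0} is not a submodule of M. Concretely, take L = {0, x, y, 1} with 0 < x, y < 1 and x, y incomparable, and μ(r₁, r₂) = 1 if (r₁,r₂) = (0,0), x if r₂ = 0 and r₁ ≠ 0, y if r₁ = 0 and r₂ ≠ 0, and 0 otherwise; then μ is an L-fuzzy submodule of ℝ² but μ* is the union of the two coordinate axes, which is not a subspace. -/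
/-- An `L`-fuzzy submodule of an `A`-module `M`. -/
def IsFuzzySubmodule (A : Type*) {M L : Type*} [CommRing A] [AddCommGroup M]
    [Module A M] [CompleteLattice L] (μ : M → L) : Prop :=
  μ 0 = ⊤ ∧ (∀ m₁ m₂ : M, μ m₁ ⊓ μ m₂ ≤ μ (m₁ + m₂)) ∧ (∀ (a : A) (m : M), μ m ≤ μ (a • m))

lemma myBot : (⊥ : Prop × Prop) = (False, False) := rfl
lemma myTop : (⊤ : Prop × Prop) = (True, True) := rfl

/-- In the four-element diamond lattice `Prop × Prop` (with `x = (True, False)` and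
`y = (False, True)` incomparable, `x ⊓ y = ⊥`, `x ⊔ y = ⊤`), the bottom element is not
meet-prime, and there is an `L`-fuzzy submodule of the real vector space `ℝ × ℝ`
(taking value `⊤` at the origin, `x` on the punctured first axis, `y` on the punctured
second axis, and `⊥` elsewhere) whose support is not a submodule of `ℝ × ℝ`. -/
theorem exists_fuzzySubmodule_support_not_submodule :
    (¬ ∀ a b : Prop × Prop, a ⊓ b ≤ ⊥ → a ≤ ⊥ ∨ b ≤ ⊥) ∧
    ∃ μ : ℝ × ℝ → Prop × Prop,
      μ = (fun m => (m.2 = 0, m.1 = 0)) ∧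
      IsFuzzySubmodule ℝ μ ∧
      {m : ℝ × ℝ | μ m ≠ ⊥} = {m : ℝ × ℝ | m.1 = 0 ∨ m.2 = 0} ∧
      ¬ ∃ N : Submodule ℝ (ℝ × ℝ), (N : Set (ℝ × ℝ)) = {m : ℝ × ℝ | μ m ≠ ⊥} := by
  constructor
  · intro h
    have := h (True, False) (False, True)
    simp [Prod.le_def, myBot] at this
  · refine ⟨_, rfl, ⟨?_, ?_, ?_⟩, ?_, ?_⟩
    · simp [myTop, Prod.ext_iff]
    · intro m₁ m₂
      simp only [Prod.le_def, Prod.inf_def]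
      constructor
      · rintro ⟨h1, h2⟩; simp_all
      · rintro ⟨h1, h2⟩; simp_all
    · intro a m
      simp only [Prod.le_def]
      constructor
      · intro h; simp [h]
      · intro h; simp [h]
    · ext m
      simp only [Set.mem_setOf_eq, ne_eq, myBot, Prod.ext_iff, eq_iff_iff, iff_false,
        not_and_or, not_not]
      tauto
    · rintro ⟨N, hN⟩
      have h1 : ((1:ℝ), (0:ℝ)) ∈ N := by
        rw [← SetLike.mem_coe, hN]; simp [myBot, Prod.ext_iff]
      have h2 : ((0:ℝ), (1:ℝ)) ∈ N := by
        rw [← SetLike.mem_coe, hN]; simp [myBot, Prod.ext_iff]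
      have h3 := N.add_mem h1 h2
      rw [← SetLike.mem_coe, hN] at h3
      simp [myBot, Prod.ext_iff] at h3
end

section
/- Let M be a module over a commutative ring A, L a complete lattice, E = {e₁, …, e_k} ⊆ M a linearly independent set, and ℓ₁, …, ℓ_k ∈ L. Define μ : M → L by μ(m) = ⋁{ℓ_i | m = e_i} (the union of fuzzy singletons {e_i}_{ℓ_i}). Then the L-fuzzy submodule ⟨μ⟩ generated by μ satisfies: for m in the span of E with unique representation m = Σ a_i e_i, ⟨μ⟩(m) = ⋀{ℓ_i | a_i ≠ 0}; and for m not in the span of E, ⟨μ⟩(m) = 0. -/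
/-- The `L`-fuzzy submodule generated by an `L`-fuzzy subset `μ`: the pointwise
infimum of all `L`-fuzzy submodules containing `μ`. -/
noncomputable def fuzzyGen (A : Type*) {M L : Type*} [CommRing A] [AddCommGroup M]
    [Module A M] [CompleteLattice L] (μ : M → L) : M → L :=
  fun m => ⨅ ν ∈ {ν : M → L | IsFuzzySubmodule A ν ∧ ∀ x, μ x ≤ ν x}, ν m

lemma fuzzy_sum_le {A M L : Type*} [CommRing A] [AddCommGroup M] [Module A M]
    [CompleteLattice L] {ρ : M → L} (hρ : IsFuzzySubmodule A ρ) {ι : Type*}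
    (s : Finset ι) (f : ι → M) : (⨅ i ∈ s, ρ (f i)) ≤ ρ (∑ i ∈ s, f i) := by
  classical
  induction s using Finset.induction with
  | empty => simp [hρ.1]
  | @insert a s h ih =>
    rw [Finset.sum_insert h]
    refine le_trans ?_ (hρ.2.1 _ _)
    have h1 : (⨅ i ∈ insert a s, ρ (f i)) ≤ ρ (f a) := biInf_le _ (Finset.mem_insert_self a s)
    have h2 : (⨅ i ∈ insert a s, ρ (f i)) ≤ ⨅ i ∈ s, ρ (f i) := by
      refine le_iInf₂ fun i hi => biInf_le _ (Finset.mem_insert_of_mem hi)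
    exact le_inf h1 (h2.trans ih)

theorem fuzzyGen_of_union_of_singletons {A M L : Type*} [CommRing A] [AddCommGroup M]
    [Module A M] [CompleteLattice L] {k : ℕ} (e : Fin k → M)
    (he : LinearIndependent A e) (l : Fin k → L) (μ : M → L)
    (hμ : μ = fun m => ⨆ i ∈ {i : Fin k | e i = m}, l i) :
    (∀ a : Fin k → A,
        fuzzyGen A μ (∑ i, a i • e i) = ⨅ i ∈ {i : Fin k | a i ≠ 0}, l i) ∧
    (∀ m : M, m ∉ Submodule.span A (Set.range e) → fuzzyGen A μ m = ⊥) := by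
  classical
  set ν : M → L := fun m =>
    if h : m ∈ Submodule.span A (Set.range e) then
      ⨅ i ∈ {i : Fin k | he.repr ⟨m, h⟩ i ≠ 0}, l i
    else ⊥ with hν
  -- ν is a fuzzy submodule
  have hν0 : ν 0 = ⊤ := by
    rw [hν]
    have h0 : (0 : M) ∈ Submodule.span A (Set.range e) := Submodule.zero_mem _
    simp only [dif_pos h0]
    have : he.repr ⟨(0 : M), h0⟩ = 0 := by
      have : (⟨(0 : M), h0⟩ : Submodule.span A (Set.range e)) = 0 := rfl
      rw [this, map_zero]
    simp [this]
  have hνadd : ∀ m₁ m₂ : M, ν m₁ ⊓ ν m₂ ≤ ν (m₁ + m₂) := by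
    intro m₁ m₂
    by_cases h1 : m₁ ∈ Submodule.span A (Set.range e)
    · by_cases h2 : m₂ ∈ Submodule.span A (Set.range e)
      · have h12 : m₁ + m₂ ∈ Submodule.span A (Set.range e) := Submodule.add_mem _ h1 h2
        rw [hν]; simp only [dif_pos h1, dif_pos h2, dif_pos h12]
        refine le_iInf₂ fun i hi => ?_
        have hrepr : he.repr ⟨m₁ + m₂, h12⟩ = he.repr ⟨m₁, h1⟩ + he.repr ⟨m₂, h2⟩ := by
          have : (⟨m₁ + m₂, h12⟩ : Submodule.span A (Set.range e)) = ⟨m₁, h1⟩ + ⟨m₂, h2⟩ := rfl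
          rw [this, map_add]
        have : he.repr ⟨m₁, h1⟩ i ≠ 0 ∨ he.repr ⟨m₂, h2⟩ i ≠ 0 := by
          by_contra hc
          push_neg at hc
          apply hi
          rw [hrepr]
          simp [hc.1, hc.2]
        rcases this with h | h
        · exact inf_le_left.trans (biInf_le _ h)
        · exact inf_le_right.trans (biInf_le _ h)
      · have : ν m₂ = ⊥ := by rw [hν]; simp [h2]
        rw [this]; simp
    · have : ν m₁ = ⊥ := by rw [hν]; simp [h1]
      rw [this]; simp
  have hνsmul : ∀ (a : A) (m : M), ν m ≤ ν (a • m) := by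
    intro a m
    by_cases h : m ∈ Submodule.span A (Set.range e)
    · have h' : a • m ∈ Submodule.span A (Set.range e) := Submodule.smul_mem _ _ h
      rw [hν]; simp only [dif_pos h, dif_pos h']
      refine le_iInf₂ fun i hi => ?_
      have hrepr : he.repr ⟨a • m, h'⟩ = a • he.repr ⟨m, h⟩ := by
        have : (⟨a • m, h'⟩ : Submodule.span A (Set.range e)) = a • ⟨m, h⟩ := rfl
        rw [this, map_smul]
      have : he.repr ⟨m, h⟩ i ≠ 0 := by
        intro hc
        apply hi
        rw [hrepr]
        simp [hc]
      exact biInf_le _ this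
    · rw [hν]; simp [h]
  have hνsub : IsFuzzySubmodule A ν := ⟨hν0, hνadd, hνsmul⟩
  -- μ ≤ ν
  have hμν : ∀ x, μ x ≤ ν x := by
    intro x
    rw [hμ]
    refine iSup₂_le fun i hi => ?_
    have hx : x ∈ Submodule.span A (Set.range e) := by
      rw [← hi]; exact Submodule.subset_span ⟨i, rfl⟩
    rw [hν]; simp only [dif_pos hx]
    refine le_iInf₂ fun j hj => ?_
    have hrepr : he.repr ⟨x, hx⟩ = Finsupp.single i 1 :=
      he.repr_eq_single i ⟨x, hx⟩ hi.symm
    have : j = i := by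
      by_contra hc
      apply hj
      rw [hrepr, Finsupp.single_apply_eq_zero]
      intro h; exact absurd h hc
    rw [this]
  -- fuzzyGen μ ≤ ν
  have hle : ∀ m, fuzzyGen A μ m ≤ ν m := fun m => biInf_le _ ⟨hνsub, hμν⟩
  -- ν ≤ fuzzyGen μ
  have hge : ∀ m, ν m ≤ fuzzyGen A μ m := by
    intro m
    refine le_iInf₂ fun ρ hρ => ?_
    obtain ⟨hρsub, hμρ⟩ := hρ
    by_cases h : m ∈ Submodule.span A (Set.range e)
    · rw [hν]; simp only [dif_pos h]
      set c := he.repr ⟨m, h⟩ with hc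
      have hm : m = ∑ i, c i • e i := by
        have := he.linearCombination_repr ⟨m, h⟩
        rw [← hc] at this
        have h2 : Finsupp.linearCombination A e c = ∑ i, c i • e i := by
          rw [Finsupp.linearCombination_apply, Finsupp.sum_fintype]
          simp
        rw [h2] at this
        exact this.symm
      rw [hm]
      refine le_trans ?_ (fuzzy_sum_le hρsub Finset.univ (fun i => c i • e i))
      refine le_iInf₂ fun i _ => ?_
      by_cases hci : c i = 0
      · have : c i • e i = (0 : M) := by rw [hci, zero_smul]
        rw [this, hρsub.1]
        exact le_top
      · refine le_trans (biInf_le _ hci) ?_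
        refine le_trans ?_ (hρsub.2.2 (c i) (e i))
        refine le_trans ?_ (hμρ (e i))
        rw [hμ]
        exact le_iSup₂ (f := fun (j : Fin k) (_ : j ∈ {j : Fin k | e j = e i}) => l j) i rfl
    · rw [hν]; simp [h]
  have heq : ∀ m, fuzzyGen A μ m = ν m := fun m => le_antisymm (hle m) (hge m)
  constructor
  · intro a
    rw [heq]
    have ha : (∑ i, a i • e i) ∈ Submodule.span A (Set.range e) :=
      Submodule.sum_mem _ fun i _ => Submodule.smul_mem _ _ (Submodule.subset_span ⟨i, rfl⟩)
    rw [hν]; simp only [dif_pos ha]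
    have hrepr : he.repr ⟨∑ i, a i • e i, ha⟩ = Finsupp.equivFunOnFinite.symm a := by
      apply he.repr_eq
      rw [Finsupp.linearCombination_apply, Finsupp.sum_fintype]
      · simp [Finsupp.equivFunOnFinite]
      · simp
    rw [hrepr]
    rfl
  · intro m hm
    rw [heq, hν]; simp [hm]
end

section
/- Let F : P → SpCpx be a filtration over a poset P (monotone: p ≤ q implies F(p) ⊆ F(q)), and define M_F : P_↑ → SpCpx on the lattice of up-sets by M_F(A) = ⋂_{p∈A} F(p). Then M_F satisfies M_F(⋃_{A∈S} A) = ⋂_{A∈S} M_F(A) for every family S of up-sets, and consequently there exists a P_↑-fuzzy subcomplex μ_F of Σ_F = ⋃_{p∈P} F(p) with μ_F^{⊇A} = M_F(A) for every up-set A; in particular μ_F^{⊇ P^{≥p}} = F(p) for all p ∈ P. -/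
/-- Simplicial complexes are modeled as lower sets of a partially ordered type `S` of
simplices. Given a filtration `F : P → Set S` over a poset `P` (monotone, with each
`F p` closed under faces), the decreasing filtration `M_F` over the lattice of up-sets
of `P`, given by `M_F A = ⋂_{p ∈ A} F p`, sends unions to intersections, and there is a
`P_↑`-fuzzy subcomplex `μ_F` of `Σ_F = ⋃ p, F p` (valued in up-sets of `P`, reversing
the face order) whose cut at each up-set `A` is `M_F A` (intersected with `Σ_F`);
in particular its cut at the principal up-set `P^{≥p}` is `F p`. -/
theorem filtration_is_fuzzy {P S : Type*} [PartialOrder P] [PartialOrder S]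
    (F : P → Set S) (hmono : Monotone F) (hlow : ∀ p, IsLowerSet (F p)) :
    (∀ 𝒮 : Set (Set P), (∀ A ∈ 𝒮, IsUpperSet A) →
        (⋂ p ∈ ⋃₀ 𝒮, F p) = ⋂ A ∈ 𝒮, ⋂ p ∈ A, F p) ∧
    ∃ μ : (⋃ p : P, F p : Set S) → Set P,
      (∀ σ, IsUpperSet (μ σ)) ∧
      (∀ σ τ : (⋃ p : P, F p : Set S), (σ : S) ≤ (τ : S) → μ τ ⊆ μ σ) ∧
      (∀ A : Set P, IsUpperSet A →
        {s : S | ∃ h : s ∈ ⋃ p : P, F p, A ⊆ μ ⟨s, h⟩} = (⋃ p : P, F p) ∩ ⋂ p ∈ A, F p) ∧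
      (∀ p : P,
        {s : S | ∃ h : s ∈ ⋃ p' : P, F p', {q : P | p ≤ q} ⊆ μ ⟨s, h⟩} = F p) := by
  refine ⟨?_, fun σ => {p | (σ : S) ∈ F p}, fun σ p q hpq hp => hmono hpq hp,
    fun σ τ hst p hp => hlow p hst hp, ?_, ?_⟩
  · intro 𝒮 _
    ext s
    simp [Set.mem_iInter, Set.mem_sUnion]
  · intro A _
    ext s
    simp only [Set.mem_setOf_eq, Set.mem_inter_iff, Set.mem_iInter, Set.mem_iUnion]
    constructor
    · rintro ⟨h, hA⟩
      exact ⟨by simpa using h, fun p hp => hA hp⟩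
    · rintro ⟨h, hA⟩
      exact ⟨by simpa using h, fun p hp => hA p hp⟩
  · intro p
    ext s
    simp only [Set.mem_setOf_eq, Set.mem_iUnion]
    constructor
    · rintro ⟨h, hA⟩
      exact hA (le_refl p)
    · intro hs
      exact ⟨by simpa using ⟨p, hs⟩, fun q hq => hmono hq hs⟩
end

section
/- Let Δ be a finite simplicial complex over a PID D, L a complete lattice with 0 meet-prime, μ an L-fuzzy subcomplex of Δ with full support, and η_d the L-fuzzy d-homology of μ defined on H_d = Z_d/B_d by η_d([h]) = ⋁{ζ_d(z) | z ∈ [h]}. For ℓ ∈ L, let H_d(ℓ) = {[h] ∈ H_d | there exists a representative cycle z ∈ [h] whose coordinates vanish on every d-simplex σ with μ(σ) ⊉ ℓ}. Then H_d(ℓ) is a submodule of H_d, H_d(ℓ₂) ⊆ H_d(ℓ₁) whenever ℓ₁ ≤ ℓ₂, and H_d(ℓ) ⊆ η_d^{≥ℓ} for every ℓ ∈ L. -/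
/-- With chain modules `C_{d+1}`, `C_d`, `C_{d-1}` free `D`-modules on the finite sets
of simplices (the basis `b` of `C_d` indexing the `d`-simplices), boundary operators
`bd1 = ∂_{d+1}` and `bd = ∂_d` with `∂_d ∘ ∂_{d+1} = 0`, `Z_d = ker ∂_d`,
`B_d = im ∂_{d+1}`, and `H_d = Z_d / B_d`: let `μd` record the (full-support) fuzzy
values of the `d`-simplices over a complete lattice `L` with `⊥` meet-prime, and let
`η([h]) = ⨆ {κ_d z | z ∈ [h]}` be the fuzzy `d`-homology, where
`κ_d z = ⨅ {μd i | zᵢ ≠ 0}` in basis coordinates. For `ℓ ∈ L`, let `Hset ℓ` be the set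
of classes having a representative cycle whose coordinates vanish on every `d`-simplex
`i` with `¬ ℓ ≤ μd i`. Then each `Hset ℓ` is a submodule of `H_d`, `ℓ ↦ Hset ℓ` is
antitone, and `Hset ℓ ⊆ η^{≥ℓ}`. -/
theorem fuzzy_homology_solvable_submodules {ι ι' ι'' D L : Type*}
    [Fintype ι] [Fintype ι'] [Fintype ι'']
    [CommRing D] [IsDomain D] [IsPrincipalIdealRing D] [CompleteLattice L]
    {Cd1 Cd Cd2 : Type*} [AddCommGroup Cd1] [Module D Cd1] [AddCommGroup Cd]
    [Module D Cd] [AddCommGroup Cd2] [Module D Cd2]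
    (b1 : Module.Basis ι D Cd1) (b : Module.Basis ι' D Cd) (b2 : Module.Basis ι'' D Cd2)
    (bd : Cd →ₗ[D] Cd2) (bd1 : Cd1 →ₗ[D] Cd)
    (hcomp : ∀ a : Cd1, bd (bd1 a) = 0)
    (hmp : ∀ a b : L, a ⊓ b ≤ ⊥ → a ≤ ⊥ ∨ b ≤ ⊥)
    (μd : ι' → L) (hμd : ∀ i, ⊥ < μd i)
    (Hset : L → Set ((LinearMap.ker bd) ⧸
      Submodule.comap (LinearMap.ker bd).subtype (LinearMap.range bd1)))
    (hHset : Hset = fun ℓ => {h | ∃ z : LinearMap.ker bd,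
      Submodule.Quotient.mk z = h ∧ ∀ i : ι', ¬ ℓ ≤ μd i → b.repr (z : Cd) i = 0})
    (η : ((LinearMap.ker bd) ⧸
      Submodule.comap (LinearMap.ker bd).subtype (LinearMap.range bd1)) → L)
    (hη : η = fun h => ⨆ z ∈ {z : LinearMap.ker bd | Submodule.Quotient.mk z = h},
      ⨅ i ∈ {i : ι' | b.repr (z : Cd) i ≠ 0}, μd i) :
    (∀ ℓ : L, ∃ N : Submodule D ((LinearMap.ker bd) ⧸
        Submodule.comap (LinearMap.ker bd).subtype (LinearMap.range bd1)),
      (N : Set _) = Hset ℓ) ∧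
    (∀ ℓ₁ ℓ₂ : L, ℓ₁ ≤ ℓ₂ → Hset ℓ₂ ⊆ Hset ℓ₁) ∧
    (∀ ℓ : L, Hset ℓ ⊆ {h | ℓ ≤ η h}) := by
  subst hHset hη
  refine ⟨?_, ?_, ?_⟩
  · intro ℓ
    set S : Submodule D (LinearMap.ker bd) :=
      { carrier := {z | ∀ i : ι', ¬ ℓ ≤ μd i → b.repr (z : Cd) i = 0}
        add_mem' := by
          intro x y hx hy i hi
          simp [map_add, hx i hi, hy i hi]
        zero_mem' := by intro i hi; simp
        smul_mem' := by
          intro c x hx i hi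
          simp [map_smul, hx i hi] } with hS
    refine ⟨S.map (Submodule.comap (LinearMap.ker bd).subtype
      (LinearMap.range bd1)).mkQ, ?_⟩
    ext h
    simp only [Submodule.map_coe, Set.mem_image, SetLike.mem_coe, Set.mem_setOf_eq]
    constructor
    · rintro ⟨z, hz, rfl⟩
      exact ⟨z, rfl, hz⟩
    · rintro ⟨z, rfl, hz⟩
      exact ⟨z, hz, rfl⟩
  · intro ℓ₁ ℓ₂ hle h hh
    obtain ⟨z, hz, hv⟩ := hh
    exact ⟨z, hz, fun i hi => hv i fun h2 => hi (hle.trans h2)⟩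
  · intro ℓ h hh
    obtain ⟨z, hz, hv⟩ := hh
    show ℓ ≤ ⨆ z ∈ {z : LinearMap.ker bd | Submodule.Quotient.mk z = h},
      ⨅ i ∈ {i : ι' | b.repr (z : Cd) i ≠ 0}, μd i
    refine le_trans ?_ (le_iSup₂ (f := fun (z : LinearMap.ker bd)
      (_ : z ∈ {z : LinearMap.ker bd | Submodule.Quotient.mk z = h}) =>
      ⨅ i ∈ {i : ι' | b.repr (z : Cd) i ≠ 0}, μd i) z hz)
    refine le_iInf₂ fun i hi => ?_
    by_contra hc
    exact hi (hv i hc)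
end
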